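/- Let F̄(x) = (1/2)‖Āx − b̄‖² + τ‖x‖₁ with τ > 0, F̄* = min F̄, and let v(x^k) be the minimum-norm subgradient of F̄ at x^k. Define F̄_low2(x^k) = F̄(x^k)(1 − ‖v(x^k)‖_∞/τ) − ⟨v(x^k), x^k⟩. Then F̄* ≥ F̄_low2(x^k) for every x^k ∈ ℝⁿ. -/
import Mathlib


open Matrix

/-- `F̄(x) = (1/2)‖Āx − b̄‖² + τ‖x‖₁`. -/
noncomputable def lsObj {m n : ℕ} (Ab : Matrix (Fin m) (Fin n) ℝ) (bb : Fin m → ℝ)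
    (τ : ℝ) (x : Fin n → ℝ) : ℝ :=
  (1 / 2) * ((Ab.mulVec x - bb) ⬝ᵥ (Ab.mulVec x - bb)) + τ * ∑ i, |x i|

/-- `∇((1/2)‖Āx − b̄‖²) = Āᵀ(Āx − b̄)`. -/
noncomputable def lsGrad {m n : ℕ} (Ab : Matrix (Fin m) (Fin n) ℝ) (bb : Fin m → ℝ)
    (x : Fin n → ℝ) : Fin n → ℝ :=
  Abᵀ.mulVec (Ab.mulVec x - bb)

/-- The minimum-norm subgradient of `F̄`, given componentwise. -/
noncomputable def lsMinSubgrad {m n : ℕ} (Ab : Matrix (Fin m) (Fin n) ℝ) (bb : Fin m → ℝ)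
    (τ : ℝ) (x : Fin n → ℝ) : Fin n → ℝ := fun i =>
  if x i ≠ 0 then lsGrad Ab bb x i + τ * Real.sign (x i)
  else min (lsGrad Ab bb x i + τ) (max 0 (lsGrad Ab bb x i - τ))

/-- The lower bound `F̄_low2(x) = F̄(x)(1 − ‖v(x)‖_∞/τ) − ⟨v(x), x⟩`. -/
noncomputable def lsLow2 {m n : ℕ} (Ab : Matrix (Fin m) (Fin n) ℝ) (bb : Fin m → ℝ)
    (τ : ℝ) (x : Fin n → ℝ) : ℝ :=
  lsObj Ab bb τ x * (1 - (⨆ i, |lsMinSubgrad Ab bb τ x i|) / τ) -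
    lsMinSubgrad Ab bb τ x ⬝ᵥ x

lemma sub_aux {m n : ℕ} (Ab : Matrix (Fin m) (Fin n) ℝ) (bb : Fin m → ℝ) (τ : ℝ)
    (hτ : 0 < τ) (x : Fin n → ℝ) (i : Fin n) :
    |lsMinSubgrad Ab bb τ x i - lsGrad Ab bb x i| ≤ τ ∧
    (lsMinSubgrad Ab bb τ x i - lsGrad Ab bb x i) * x i = τ * |x i| := by
  unfold lsMinSubgrad
  by_cases h : x i ≠ 0
  · rw [if_pos h]
    rcases lt_trichotomy (x i) 0 with hx | hx | hx
    · rw [Real.sign_of_neg hx]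
      refine ⟨?_, by rw [abs_of_neg hx]; ring⟩
      rw [show lsGrad Ab bb x i + τ * (-1) - lsGrad Ab bb x i = -τ by ring, abs_neg,
        abs_of_pos hτ]
    · exact absurd hx h
    · rw [Real.sign_of_pos hx]
      refine ⟨?_, by rw [abs_of_pos hx]; ring⟩
      rw [show lsGrad Ab bb x i + τ * 1 - lsGrad Ab bb x i = τ by ring, abs_of_pos hτ]
  · push_neg at h
    rw [if_neg (by simp [h])]
    refine ⟨?_, by simp [h]⟩
    rw [abs_le]
    constructor
    · have h1 : lsGrad Ab bb x i - τ ≤ max 0 (lsGrad Ab bb x i - τ) := le_max_right _ _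
      have h2 : lsGrad Ab bb x i - τ ≤ lsGrad Ab bb x i + τ := by linarith
      have := le_min h2 h1
      linarith
    · have := min_le_left (lsGrad Ab bb x i + τ) (max 0 (lsGrad Ab bb x i - τ))
      linarith

lemma subgrad_ineq {m n : ℕ} (Ab : Matrix (Fin m) (Fin n) ℝ) (bb : Fin m → ℝ) (τ : ℝ)
    (hτ : 0 < τ) (x y : Fin n → ℝ) :
    lsObj Ab bb τ x + lsMinSubgrad Ab bb τ x ⬝ᵥ (y - x) ≤ lsObj Ab bb τ y := by
  have hquad : (1/2) * ((Ab.mulVec x - bb) ⬝ᵥ (Ab.mulVec x - bb)) + lsGrad Ab bb x ⬝ᵥ (y - x)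
      ≤ (1/2) * ((Ab.mulVec y - bb) ⬝ᵥ (Ab.mulVec y - bb)) := by
    have key : Ab.mulVec y - bb = (Ab.mulVec x - bb) + Ab.mulVec (y - x) := by
      rw [Matrix.mulVec_sub]; abel
    have hg : lsGrad Ab bb x ⬝ᵥ (y - x) = (Ab.mulVec x - bb) ⬝ᵥ Ab.mulVec (y - x) := by
      rw [lsGrad, Matrix.mulVec_transpose, ← Matrix.dotProduct_mulVec]
    have hnn : 0 ≤ Ab.mulVec (y - x) ⬝ᵥ Ab.mulVec (y - x) :=
      Finset.sum_nonneg fun i _ => mul_self_nonneg _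
    rw [key, add_dotProduct, dotProduct_add, dotProduct_add, hg,
      dotProduct_comm (Ab.mulVec (y - x)) (Ab.mulVec x - bb)]
    linarith
  have hl1 : ∀ i, (lsMinSubgrad Ab bb τ x i - lsGrad Ab bb x i) * (y i - x i)
      ≤ τ * |y i| - τ * |x i| := by
    intro i
    obtain ⟨h1, h2⟩ := sub_aux Ab bb τ hτ x i
    have h3 : (lsMinSubgrad Ab bb τ x i - lsGrad Ab bb x i) * y i ≤ τ * |y i| := by
      calc (lsMinSubgrad Ab bb τ x i - lsGrad Ab bb x i) * y i
          ≤ |(lsMinSubgrad Ab bb τ x i - lsGrad Ab bb x i) * y i| := le_abs_self _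
        _ = |lsMinSubgrad Ab bb τ x i - lsGrad Ab bb x i| * |y i| := abs_mul _ _
        _ ≤ τ * |y i| := mul_le_mul_of_nonneg_right h1 (abs_nonneg _)
    nlinarith [h2, h3]
  have hsum : ∑ i, (lsMinSubgrad Ab bb τ x i - lsGrad Ab bb x i) * (y i - x i)
      ≤ τ * ∑ i, |y i| - τ * ∑ i, |x i| := by
    calc ∑ i, (lsMinSubgrad Ab bb τ x i - lsGrad Ab bb x i) * (y i - x i)
        ≤ ∑ i, (τ * |y i| - τ * |x i|) := Finset.sum_le_sum fun i _ => hl1 i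
      _ = τ * ∑ i, |y i| - τ * ∑ i, |x i| := by
          rw [Finset.sum_sub_distrib, Finset.mul_sum, Finset.mul_sum]
  have hsplit : lsMinSubgrad Ab bb τ x ⬝ᵥ (y - x) = lsGrad Ab bb x ⬝ᵥ (y - x) +
      ∑ i, (lsMinSubgrad Ab bb τ x i - lsGrad Ab bb x i) * (y i - x i) := by
    simp only [dotProduct, ← Finset.sum_add_distrib]
    refine Finset.sum_congr rfl fun i _ => ?_
    simp only [Pi.sub_apply]; ring
  unfold lsObj
  rw [hsplit]
  linarith


/-- `F̄* ≥ F̄_low2(x^k)` for every `x^k`. -/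
theorem stmt14 {m n : ℕ} (Ab : Matrix (Fin m) (Fin n) ℝ) (bb : Fin m → ℝ) (τ : ℝ)
    (hτ : 0 < τ) (xstar : Fin n → ℝ)
    (hopt : ∀ y, lsObj Ab bb τ xstar ≤ lsObj Ab bb τ y) :
    ∀ xk : Fin n → ℝ, lsObj Ab bb τ xstar ≥ lsLow2 Ab bb τ xk := by
  intro xk
  rcases Nat.eq_zero_or_pos n with hn | hn
  · subst hn
    have hxx : xstar = xk := Subsingleton.elim _ _
    have hM : (⨆ i : Fin 0, |lsMinSubgrad Ab bb τ xk i|) = 0 := by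
      rw [show (⨆ i : Fin 0, |lsMinSubgrad Ab bb τ xk i|) = sSup ∅ by
        rw [iSup, Set.range_eq_empty]]
      exact Real.sSup_empty
    rw [lsLow2, hM, hxx]
    simp [dotProduct]
  · set v := lsMinSubgrad Ab bb τ xk with hv
    set M := ⨆ i, |v i| with hMdef
    have hMb : ∀ i, |v i| ≤ M := fun i =>
      le_ciSup (f := fun j => |v j|) (Set.Finite.bddAbove (Set.finite_range _)) i
    have hM0 : 0 ≤ M := le_trans (abs_nonneg _) (hMb ⟨0, hn⟩)
    have hsub := subgrad_ineq Ab bb τ hτ xk xstar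
    have hFk0 : 0 ≤ lsObj Ab bb τ xk := by
      have h1 : 0 ≤ (Ab.mulVec xk - bb) ⬝ᵥ (Ab.mulVec xk - bb) :=
        Finset.sum_nonneg fun i _ => mul_self_nonneg _
      have h2 : 0 ≤ ∑ i, |xk i| := Finset.sum_nonneg fun i _ => abs_nonneg _
      unfold lsObj; nlinarith
    have hx1 : τ * ∑ i, |xstar i| ≤ lsObj Ab bb τ xk := by
      have h1 : τ * ∑ i, |xstar i| ≤ lsObj Ab bb τ xstar := by
        have : 0 ≤ (Ab.mulVec xstar - bb) ⬝ᵥ (Ab.mulVec xstar - bb) :=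
          Finset.sum_nonneg fun i _ => mul_self_nonneg _
        unfold lsObj; linarith
      exact h1.trans (hopt xk)
    have hdot : |v ⬝ᵥ xstar| ≤ M * ∑ i, |xstar i| := by
      calc |∑ i, v i * xstar i| ≤ ∑ i, |v i * xstar i| := Finset.abs_sum_le_sum_abs _ _
        _ = ∑ i, |v i| * |xstar i| := by simp [abs_mul]
        _ ≤ ∑ i, M * |xstar i| :=
            Finset.sum_le_sum fun i _ => mul_le_mul_of_nonneg_right (hMb i) (abs_nonneg _)
        _ = M * ∑ i, |xstar i| := by rw [Finset.mul_sum]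
    have hMS : M * ∑ i, |xstar i| ≤ (M / τ) * lsObj Ab bb τ xk := by
      have := mul_le_mul_of_nonneg_left hx1 (div_nonneg hM0 hτ.le)
      calc M * ∑ i, |xstar i| = (M / τ) * (τ * ∑ i, |xstar i|) := by
            field_simp
        _ ≤ (M / τ) * lsObj Ab bb τ xk := this
    have hsplit : v ⬝ᵥ (xstar - xk) = v ⬝ᵥ xstar - v ⬝ᵥ xk := by
      rw [dotProduct_sub]
    rw [ge_iff_le, lsLow2, ← hv, ← hMdef]
    have habs : -(M * ∑ i, |xstar i|) ≤ v ⬝ᵥ xstar := neg_le_of_abs_le hdot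
    rw [hsplit] at hsub
    nlinarith
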